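/- Every path Spanier subgroup of π₁(X,x₀) is locally quasinormal: if 𝒱 = {V_α : α ∈ P(X,x₀)} is a path open cover of X and π̃(𝒱,x₀) the associated path Spanier subgroup, then for every path α from x₀, π(α, V_α)·π̃(𝒱,x₀) = π̃(𝒱,x₀)·π(α, V_α). -/

import Mathlib

open CategoryTheory Topology
open scoped Pointwise

noncomputable section
namespace Paper

variable {X : Type*} [TopologicalSpace X]

attribute [local instance] Path.Homotopic.setoid

/-- The homotopy class of a loop as an element of the fundamental group. -/
def loopClass {x : X} (γ : Path x x) : FundamentalGroup X x :=
  FundamentalGroup.fromPath ⟦γ⟧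

/-- Conjugation of the fundamental group along a path: `h ↦ [ᾱ ∗ h ∗ α]`. -/
def pathConj {x₀ x : X} (α : Path x₀ x) :
    FundamentalGroup X x₀ ≃* FundamentalGroup X x :=
  FundamentalGroup.fundamentalGroupMulEquivOfPath α

/-- The path-conjugate subgroup `H_α = [ᾱ H α]`. -/
def conjSubgroup {x₀ x : X} (H : Subgroup (FundamentalGroup X x₀)) (α : Path x₀ x) :
    Subgroup (FundamentalGroup X x) :=
  H.map (pathConj α).toMonoidHom

/-- `π(α,V)`: the subgroup of `π₁(X,x₀)` generated by classes `[α∗β∗ᾱ]`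
with `β` a loop at `α(1)` lying in `V`. -/
def piSub {x₀ x : X} (α : Path x₀ x) (V : Set X) : Subgroup (FundamentalGroup X x₀) :=
  Subgroup.closure
    {g | ∃ β : Path x x, (∀ t, β t ∈ V) ∧ g = loopClass ((α.trans β).trans α.symm)}

/-- `i₍#₎π₁(V,x)`: the image in `π₁(X,x)` of the fundamental group of `V`. -/
def loopSubgroup (x : X) (V : Set X) : Subgroup (FundamentalGroup X x) :=
  Subgroup.closure {g | ∃ β : Path x x, (∀ t, β t ∈ V) ∧ g = loopClass β}

/-- `H` is locally quasinormal. -/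
def LocallyQuasinormal {x₀ : X} (H : Subgroup (FundamentalGroup X x₀)) : Prop :=
  ∀ (x : X) (α : Path x₀ x) (U : Set X), IsOpen U → x ∈ U →
    ∃ V : Set X, V ⊆ U ∧ IsOpen V ∧ x ∈ V ∧
      (H : Set (FundamentalGroup X x₀)) * (piSub α V : Set (FundamentalGroup X x₀)) =
        (piSub α V : Set (FundamentalGroup X x₀)) * (H : Set (FundamentalGroup X x₀))

/-- `X` is an `H`-SLT space at the basepoint of `H`. -/
def SLTAt {b : X} (H : Subgroup (FundamentalGroup X b)) : Prop :=
  ∀ (x : X) (α : Path b x) (U : Set X), IsOpen U → b ∈ U →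
    ∃ V : Set X, IsOpen V ∧ x ∈ V ∧
      ∀ β : Path x x, (∀ t, β t ∈ V) →
        loopClass ((α.trans β).trans α.symm) ∈
          (H : Set (FundamentalGroup X b)) * (loopSubgroup b U : Set (FundamentalGroup X b))

/-- `X` is an `H`-SLT space. -/
def IsHSLT {x₀ : X} (H : Subgroup (FundamentalGroup X x₀)) : Prop :=
  ∀ (x : X) (δ : Path x₀ x), SLTAt (conjSubgroup H δ)

/-- `X` is a strong `H`-SLT space at the basepoint of `H`. -/
def StrongSLTAt {b : X} (H : Subgroup (FundamentalGroup X b)) : Prop :=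
  ∀ (x : X) (U : Set X), IsOpen U → b ∈ U →
    ∃ V : Set X, IsOpen V ∧ x ∈ V ∧
      ∀ (α : Path b x) (β : Path x x), (∀ t, β t ∈ V) →
        loopClass ((α.trans β).trans α.symm) ∈
          (H : Set (FundamentalGroup X b)) * (loopSubgroup b U : Set (FundamentalGroup X b))

/-- `X` is a strong `H`-SLT space. -/
def IsStrongHSLT {x₀ : X} (H : Subgroup (FundamentalGroup X x₀)) : Prop :=
  ∀ (x : X) (δ : Path x₀ x), StrongSLTAt (conjSubgroup H δ)

/-- `X` is homotopically Hausdorff relative to `H`. -/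
def HomotopicallyHausdorffRel {b : X} (H : Subgroup (FundamentalGroup X b)) : Prop :=
  ∀ (x : X) (α : Path b x) (g : FundamentalGroup X b), g ∉ H →
    ∃ U : Set X, IsOpen U ∧ x ∈ U ∧
      ∀ β : Path x x, (∀ t, β t ∈ U) →
        ∀ h ∈ H, loopClass ((α.trans β).trans α.symm) ≠ h * g

/-- `X` is homotopically path Hausdorff relative to `H`. -/
def HomotopicallyPathHausdorffRel {b : X} (H : Subgroup (FundamentalGroup X b)) : Prop :=
  ∀ (x : X) (α β : Path b x), loopClass (α.trans β.symm) ∉ H →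
    ∃ (n : ℕ), 0 < n ∧
    ∃ (t : Fin (n + 1) → unitInterval) (U : Fin n → Set X),
      StrictMono t ∧ t 0 = 0 ∧ t (Fin.last n) = 1 ∧
      (∀ i : Fin n, IsOpen (U i) ∧ ∀ s ∈ Set.Icc (t i.castSucc) (t i.succ), α s ∈ U i) ∧
      ∀ γ : Path b x,
        (∀ i : Fin n, ∀ s ∈ Set.Icc (t i.castSucc) (t i.succ), γ s ∈ U i) →
        (∀ j : Fin (n + 1), γ (t j) = α (t j)) →
        loopClass (γ.trans β.symm) ∉ H

/-- The collection of paths starting at `b`, with free endpoint. -/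
def PathsFrom (b : X) := Σ x : X, Path b x

/-- The relation identifying paths in the standard construction `X̃_H`. -/
def stdRel {b : X} (H : Subgroup (FundamentalGroup X b)) :
    PathsFrom b → PathsFrom b → Prop :=
  fun p q => ∃ h : q.1 = p.1, loopClass (p.2.trans (h ▸ q.2).symm) ∈ H

/-- The standard construction `X̃_H`. -/
def StdConstr {b : X} (H : Subgroup (FundamentalGroup X b)) := Quot (stdRel H)

/-- The class `[α]_H` of a path in the standard construction. -/
def stdClass {b : X} (H : Subgroup (FundamentalGroup X b)) (p : PathsFrom b) :
    StdConstr H :=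
  Quot.mk _ p

/-- The basic whisker neighborhood `N_H([α]_H, U)`. -/
def whiskerNbhd {b : X} (H : Subgroup (FundamentalGroup X b)) (p : PathsFrom b)
    (U : Set X) : Set (StdConstr H) :=
  {z | ∃ (y : X) (δ : Path p.1 y), (∀ t, δ t ∈ U) ∧ z = stdClass H ⟨y, p.2.trans δ⟩}

/-- The whisker topology on the standard construction. -/
def whiskerTopology {b : X} (H : Subgroup (FundamentalGroup X b)) :
    TopologicalSpace (StdConstr H) :=
  TopologicalSpace.generateFrom
    {s | ∃ (p : PathsFrom b) (U : Set X), IsOpen U ∧ p.1 ∈ U ∧ s = whiskerNbhd H p U}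

/-- The Spanier subgroup `π(𝒰, y)` of `π₁(X,y)` associated to a family `𝒰` of subsets. -/
def spanier (y : X) (𝒰 : Set (Set X)) : Subgroup (FundamentalGroup X y) :=
  Subgroup.closure
    {g | ∃ (z : X) (γ : Path y z) (β : Path z z), (∃ U ∈ 𝒰, ∀ t, β t ∈ U) ∧
          g = loopClass ((γ.trans β).trans γ.symm)}

/-- An open cover of `X`. -/
def IsOpenCover (𝒰 : Set (Set X)) : Prop :=
  (∀ U ∈ 𝒰, IsOpen U) ∧ ⋃₀ 𝒰 = Set.univ

/-- The basic lasso neighborhood `N_H([α]_H, 𝒰, U)`. -/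
def lassoNbhd {b : X} (H : Subgroup (FundamentalGroup X b)) (p : PathsFrom b)
    (𝒰 : Set (Set X)) (U : Set X) : Set (StdConstr H) :=
  {z | ∃ (l : Path p.1 p.1) (y : X) (δ : Path p.1 y),
        loopClass l ∈ spanier p.1 𝒰 ∧ (∀ t, δ t ∈ U) ∧
        z = stdClass H ⟨y, (p.2.trans l).trans δ⟩}

/-- The lasso topology on the standard construction. -/
def lassoTopology {b : X} (H : Subgroup (FundamentalGroup X b)) :
    TopologicalSpace (StdConstr H) :=
  TopologicalSpace.generateFrom
    {s | ∃ (p : PathsFrom b) (𝒰 : Set (Set X)) (U : Set X),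
          IsOpenCover 𝒰 ∧ U ∈ 𝒰 ∧ IsOpen U ∧ p.1 ∈ U ∧ s = lassoNbhd H p 𝒰 U}

/-- The endpoint projection `p_H : X̃_H → X`. -/
def endPt {b : X} (H : Subgroup (FundamentalGroup X b)) : StdConstr H → X :=
  Quot.lift (fun p => p.1) (fun _ _ h => h.1.symm)

/-- The whisker topology on the fundamental group `π₁^{wh}(X,x)`. -/
def whiskerTopOnPi (x : X) : TopologicalSpace (FundamentalGroup X x) :=
  TopologicalSpace.generateFrom
    {s | ∃ (g : FundamentalGroup X x) (U : Set X), IsOpen U ∧ x ∈ U ∧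
          s = {g' | ∃ β : Path x x, (∀ t, β t ∈ U) ∧ g' = g * loopClass β}}

/-- The quasitopological fundamental group topology `π₁^{qtop}(X,x)`: the quotient of the
compact-open topology on the loop space. -/
def qTop (x : X) : TopologicalSpace (FundamentalGroup X x) :=
  TopologicalSpace.coinduced loopClass inferInstance

/-- A map `p : E → X` (with `E` carrying the topology `tE`) has the unique path
lifting property. -/
def UniquePathLifting {E : Type*} (tE : TopologicalSpace E) (p : E → X) : Prop :=
  letI := tE
  ∀ f g : C(unitInterval, E), (∀ t, p (f t) = p (g t)) → f 0 = g 0 → f = g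

/-- The small loop subgroup `π₁ˢ(X,x)`. -/
def smallLoopSubgroup (x : X) : Subgroup (FundamentalGroup X x) :=
  ⨅ (U : Set X) (_ : IsOpen U) (_ : x ∈ U), loopSubgroup x U

/-- The Spanier group `π₁^{sp}(X,x)`: the intersection of all Spanier subgroups. -/
def spanierGroup (x : X) : Subgroup (FundamentalGroup X x) :=
  ⨅ (𝒰 : Set (Set X)) (_ : IsOpenCover 𝒰), spanier x 𝒰

/-- The path Spanier subgroup `π̃(𝒱, x₀)` of a path open cover `𝒱`. -/
def pathSpanier {b : X} (𝒱 : PathsFrom b → Set X) : Subgroup (FundamentalGroup X b) :=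
  Subgroup.closure
    {g | ∃ (p : PathsFrom b) (β : Path p.1 p.1), (∀ t, β t ∈ 𝒱 p) ∧
          g = loopClass ((p.2.trans β).trans p.2.symm)}

end Paper
end
namespace Paper
variable {X : Type*} [TopologicalSpace X]

theorem piSub_le_pathSpanier {x₀ : X} (𝒱 : PathsFrom x₀ → Set X) (p : PathsFrom x₀) :
    piSub p.2 (𝒱 p) ≤ pathSpanier 𝒱 :=
  Subgroup.closure_mono fun _ ⟨β, hβ, hg⟩ => ⟨p, β, hβ, hg⟩

theorem pathSpanier_locallyQuasinormal_general {x₀ : X}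
    (𝒱 : PathsFrom x₀ → Set X) :
    ∀ p : PathsFrom x₀,
      (piSub p.2 (𝒱 p) : Set (FundamentalGroup X x₀)) *
          (pathSpanier 𝒱 : Set (FundamentalGroup X x₀)) =
        (pathSpanier 𝒱 : Set (FundamentalGroup X x₀)) *
          (piSub p.2 (𝒱 p) : Set (FundamentalGroup X x₀)) := fun p =>
  -- a subgroup of `π̃(𝒱,x₀)` lies in its normalizer, hence permutes with it
  Subgroup.set_mul_normalizer_comm _ _ ((piSub_le_pathSpanier 𝒱 p).trans Subgroup.le_normalizer)

/-- Example 3.13: every path Spanier subgroup is locally quasinormal: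
`π(α,V_α)` permutes with `π̃(𝒱,x₀)` for every path `α` from `x₀`. -/
theorem pathSpanier_locallyQuasinormal [PathConnectedSpace X] {x₀ : X}
    (𝒱 : PathsFrom x₀ → Set X)
    (hcov : ∀ p : PathsFrom x₀, IsOpen (𝒱 p) ∧ p.1 ∈ 𝒱 p) :
    ∀ p : PathsFrom x₀,
      (piSub p.2 (𝒱 p) : Set (FundamentalGroup X x₀)) *
          (pathSpanier 𝒱 : Set (FundamentalGroup X x₀)) =
        (pathSpanier 𝒱 : Set (FundamentalGroup X x₀)) *
          (piSub p.2 (𝒱 p) : Set (FundamentalGroup X x₀)) :=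
  pathSpanier_locallyQuasinormal_general 𝒱

end Paper
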